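/- Let λ_i, λ_j > 0 and let a_i ≤ b_i, a_j ≤ b_j, v_i, v_j be real numbers. Set ξ_j := (1/λ_j)·max(v_j − b_j, 0) − (1/λ_j)·max(a_j − v_j, 0) and ξ_i := (1/λ_i)·max(v_i − b_i, 0) − (1/λ_i)·max(a_i − v_i, 0). Then (ξ_j − ξ_i)·(v_j − v_i) ≥ −(λ_j + λ_i)·|ξ_j|·|ξ_i| − (|ξ_j| + |ξ_i|)·(|b_j − b_i| + |a_j − a_i|). -/

import Mathlib

/-!
Let `p = projIcc a b v` be the projection of `v` onto `[a, b]`. Then the Yosida approximation is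
`ξ = (v - p) / λ`, so `v = p + λ ξ`, and `ξ` lies in the normal cone of `[a, b]` at `p`: it is
positive only if `p = b` and negative only if `p = a`. Splitting
`v_j - v_i = (p_j - p_i) + (λ_j ξ_j - λ_i ξ_i)`, the normal-cone property bounds
`ξ_j (p_j - p_i)` and `ξ_i (p_i - p_j)` from below by the distance between the endpoints of the
two intervals, and the remaining quadratic part `λ_j ξ_j² + λ_i ξ_i² - (λ_j + λ_i) ξ_j ξ_i` is at
least `-(λ_j + λ_i) |ξ_j| |ξ_i|`.
-/

open Set

lemma neg_abs_mul_le_mul_sub_of_normal {ξ p q a b a' b' : ℝ}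
    (hpos : 0 < ξ → p = b) (hneg : ξ < 0 → p = a) (hq : q ∈ Icc a' b') :
    -|ξ| * (|b - b'| + |a - a'|) ≤ ξ * (p - q) := by
  rcases lt_trichotomy ξ 0 with hξ | rfl | hξ
  · rw [hneg hξ, abs_of_neg hξ]
    nlinarith [le_abs_self (a - a'), abs_nonneg (b - b'), hq.1]
  · simp
  · rw [hpos hξ, abs_of_pos hξ]
    nlinarith [neg_abs_le (b - b'), abs_nonneg (a - a'), hq.2]

noncomputable def yosidaIcc (lam a b v : ℝ) : ℝ :=
  (1 / lam) * max (v - b) 0 - (1 / lam) * max (a - v) 0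

section

variable {lam a b v : ℝ}

lemma max_sub_sub_max_eq_sub_projIcc (hab : a ≤ b) :
    max (v - b) 0 - max (a - v) 0 = v - projIcc a b hab v := by
  rw [coe_projIcc]
  rcases le_total v a with hva | hav
  · rw [max_eq_right (by linarith), max_eq_left (by linarith), min_eq_right (by linarith),
      max_eq_left hva]
    ring
  rcases le_total v b with hvb | hbv
  · rw [max_eq_right (by linarith), max_eq_right (by linarith), min_eq_right hvb,
      max_eq_right hav]
    ring
  · rw [max_eq_left (by linarith), max_eq_right (by linarith), min_eq_left hbv, max_eq_right hab]
    ring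

lemma yosidaIcc_eq_div (hab : a ≤ b) : yosidaIcc lam a b v = (v - projIcc a b hab v) / lam := by
  rw [yosidaIcc, ← mul_sub, max_sub_sub_max_eq_sub_projIcc hab, one_div_mul_eq_div]

lemma eq_projIcc_add_mul_yosidaIcc (hlam : lam ≠ 0) (hab : a ≤ b) :
    v = projIcc a b hab v + lam * yosidaIcc lam a b v := by
  rw [yosidaIcc_eq_div hab, mul_div_cancel₀ _ hlam]
  ring

lemma projIcc_eq_right_of_yosidaIcc_pos (hlam : 0 < lam) (hab : a ≤ b)
    (hξ : 0 < yosidaIcc lam a b v) : (projIcc a b hab v : ℝ) = b := by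
  rw [yosidaIcc_eq_div hab, div_pos_iff_of_pos_right hlam, sub_pos, coe_projIcc] at hξ
  have hbv : b ≤ v := by
    by_contra! hvb
    rw [min_eq_right hvb.le] at hξ
    exact (le_max_right a v).not_gt hξ
  rw [projIcc_of_right_le hab hbv]

lemma projIcc_eq_left_of_yosidaIcc_neg (hlam : 0 < lam) (hab : a ≤ b)
    (hξ : yosidaIcc lam a b v < 0) : (projIcc a b hab v : ℝ) = a := by
  rw [yosidaIcc_eq_div hab, div_lt_iff₀ hlam, zero_mul, sub_neg, coe_projIcc] at hξ
  have hva : v ≤ a := by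
    by_contra! hav
    exact (max_le hav.le (min_le_right b v)).not_gt hξ
  rw [projIcc_of_le_left hab hva]

lemma neg_abs_mul_le_yosidaIcc_mul_sub_projIcc (hlam : 0 < lam) (hab : a ≤ b) {q a' b' : ℝ}
    (hq : q ∈ Icc a' b') :
    -|yosidaIcc lam a b v| * (|b - b'| + |a - a'|) ≤
      yosidaIcc lam a b v * (projIcc a b hab v - q) :=
  neg_abs_mul_le_mul_sub_of_normal (projIcc_eq_right_of_yosidaIcc_pos hlam hab)
    (projIcc_eq_left_of_yosidaIcc_neg hlam hab) hq

end

/-- The general lower estimate for the cross term of two Yosida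
approximations of subdifferentials of indicator functions of intervals. -/
theorem yosida_cross_term_estimate
    (lam_i lam_j : ℝ) (hlam_i : 0 < lam_i) (hlam_j : 0 < lam_j)
    (a_i b_i a_j b_j v_i v_j : ℝ) (hab_i : a_i ≤ b_i) (hab_j : a_j ≤ b_j) :
    ((1 / lam_j) * max (v_j - b_j) 0 - (1 / lam_j) * max (a_j - v_j) 0 -
        ((1 / lam_i) * max (v_i - b_i) 0 - (1 / lam_i) * max (a_i - v_i) 0)) *
        (v_j - v_i) ≥
      -(lam_j + lam_i) *
          |(1 / lam_j) * max (v_j - b_j) 0 - (1 / lam_j) * max (a_j - v_j) 0| *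
          |(1 / lam_i) * max (v_i - b_i) 0 - (1 / lam_i) * max (a_i - v_i) 0| -
        (|(1 / lam_j) * max (v_j - b_j) 0 - (1 / lam_j) * max (a_j - v_j) 0| +
            |(1 / lam_i) * max (v_i - b_i) 0 - (1 / lam_i) * max (a_i - v_i) 0|) *
          (|b_j - b_i| + |a_j - a_i|) := by
  change (yosidaIcc lam_j a_j b_j v_j - yosidaIcc lam_i a_i b_i v_i) * (v_j - v_i) ≥
    -(lam_j + lam_i) * |yosidaIcc lam_j a_j b_j v_j| * |yosidaIcc lam_i a_i b_i v_i| -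
      (|yosidaIcc lam_j a_j b_j v_j| + |yosidaIcc lam_i a_i b_i v_i|) * (|b_j - b_i| + |a_j - a_i|)
  have hj := neg_abs_mul_le_yosidaIcc_mul_sub_projIcc (v := v_j) hlam_j hab_j
    (projIcc a_i b_i hab_i v_i).2
  have hi := neg_abs_mul_le_yosidaIcc_mul_sub_projIcc (v := v_i) hlam_i hab_i
    (projIcc a_j b_j hab_j v_j).2
  rw [abs_sub_comm b_i, abs_sub_comm a_i] at hi
  have hv_j := eq_projIcc_add_mul_yosidaIcc (v := v_j) hlam_j.ne' hab_j
  have hv_i := eq_projIcc_add_mul_yosidaIcc (v := v_i) hlam_i.ne' hab_i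
  set ξ_j := yosidaIcc lam_j a_j b_j v_j
  set ξ_i := yosidaIcc lam_i a_i b_i v_i
  have hcross : ξ_j * ξ_i ≤ |ξ_j| * |ξ_i| := abs_mul ξ_j ξ_i ▸ le_abs_self _
  rw [hv_j, hv_i]
  linarith [mul_le_mul_of_nonneg_left hcross (add_pos hlam_j hlam_i).le,
    mul_nonneg hlam_j.le (sq_nonneg ξ_j), mul_nonneg hlam_i.le (sq_nonneg ξ_i)]
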